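/- Let m > 1, S : Ω → ℝ with S > 0, and suppose u, U : (0,∞) × Ω → ℝ satisfy S(x)/(t+t₀)^{1/(m-1)} ≤ u(t,x) ≤ S(x)/t^{1/(m-1)} for all t ≥ t₀ > 0, where U(t,x) = S(x)/t^{1/(m-1)}. Then for all t ≥ t₀ and x ∈ Ω, |u(t,x)/U(t,x) - 1| ≤ (2/(m-1)) · t₀/(t₀ + t). -/

import Mathlib

/-!
Since `t ≤ t + t₀`, the two bounds pin `u / U` between `(t / (t + t₀))^β = (1 - y)^β` and `1`,
where `β = 1/(m-1)` and `y = t₀/(t + t₀) ≤ 1/2`. It remains to see `1 - (1 - y)^β ≤ 2βy`: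
`log (1 - y) ≥ -y/(1 - y) ≥ -2y` and `exp z ≥ 1 + z`.
-/

open Real

lemma neg_two_mul_le_log_one_sub {y : ℝ} (hy₀ : 0 ≤ y) (hy : y ≤ 1 / 2) :
    -(2 * y) ≤ log (1 - y) := by
  have h₁ : 0 < 1 - y := by linarith
  have hinv : (1 - y)⁻¹ ≤ 1 + 2 * y := by
    rw [inv_le_iff_one_le_mul₀ h₁]
    nlinarith
  linarith [one_sub_inv_le_log_of_pos h₁]

lemma one_sub_rpow_one_sub_le {y β : ℝ} (hy₀ : 0 ≤ y) (hy : y ≤ 1 / 2) (hβ : 0 ≤ β) :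
    1 - (1 - y) ^ β ≤ 2 * β * y := by
  have hlog : β * -(2 * y) ≤ log (1 - y) * β := by
    nlinarith [mul_le_mul_of_nonneg_left (neg_two_mul_le_log_one_sub hy₀ hy) hβ]
  calc 1 - (1 - y) ^ β = 1 - exp (log (1 - y) * β) := by rw [rpow_def_of_pos (by linarith)]
    _ ≤ 1 - exp (β * -(2 * y)) := by gcongr
    _ ≤ 2 * β * y := by linarith [add_one_le_exp (β * -(2 * y))]

lemma abs_div_sub_one_le_one_sub_div {v L U : ℝ} (hU : 0 < U) (hL : L ≤ v) (hv : v ≤ U) :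
    |v / U - 1| ≤ 1 - L / U := by
  have hle : v / U ≤ 1 := (div_le_one hU).mpr hv
  have hge : L / U ≤ v / U := by gcongr
  rw [abs_of_nonpos (by linarith)]
  linarith

/-- If `S(x)/(t+t₀)^{1/(m-1)} ≤ u(t,x) ≤ S(x)/t^{1/(m-1)} = U(t,x)` for `t ≥ t₀ > 0`,
with `S > 0` and `m > 1`, then `|u(t,x)/U(t,x) - 1| ≤ (2/(m-1)) t₀/(t₀+t)`. -/
theorem stmt_9 {Ω : Type*} (m t₀ : ℝ) (hm : 1 < m) (ht₀ : 0 < t₀)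
    (S : Ω → ℝ) (hS : ∀ x, 0 < S x) (u : ℝ → Ω → ℝ)
    (hlow : ∀ t, t₀ ≤ t → ∀ x, S x / (t + t₀) ^ (1 / (m - 1)) ≤ u t x)
    (hup : ∀ t, t₀ ≤ t → ∀ x, u t x ≤ S x / t ^ (1 / (m - 1))) :
    ∀ t, t₀ ≤ t → ∀ x,
      |u t x / (S x / t ^ (1 / (m - 1))) - 1| ≤ (2 / (m - 1)) * (t₀ / (t₀ + t)) := by
  intro t ht x
  set β := 1 / (m - 1)
  have hβ : 0 < β := one_div_pos.mpr (by linarith)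
  have htpos : 0 < t := ht₀.trans_le ht
  have htt : 0 < t₀ + t := by linarith
  have hratio : S x / (t + t₀) ^ β / (S x / t ^ β) = (1 - t₀ / (t₀ + t)) ^ β := by
    have : 1 - t₀ / (t₀ + t) = t / (t + t₀) := by field_simp; ring
    rw [this, div_rpow htpos.le (by linarith)]
    have := (hS x).ne'
    field_simp
  have hy : t₀ / (t₀ + t) ≤ 1 / 2 := by rw [div_le_iff₀ htt]; linarith
  calc |u t x / (S x / t ^ β) - 1|
      ≤ 1 - S x / (t + t₀) ^ β / (S x / t ^ β) :=
        abs_div_sub_one_le_one_sub_div (by have := hS x; positivity) (hlow t ht x) (hup t ht x)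
    _ = 1 - (1 - t₀ / (t₀ + t)) ^ β := by rw [hratio]
    _ ≤ 2 * β * (t₀ / (t₀ + t)) := one_sub_rpow_one_sub_le (by positivity) hy hβ.le
    _ = 2 / (m - 1) * (t₀ / (t₀ + t)) := by ring
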